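/- arXiv:0904.1412 — 5 statements merged into one kernel-verified Lean document; each statement's English description precedes it below -/
import Mathlib

section
/- Let E be a nonzero finite-dimensional real inner product space and let A : E → E be a linear isometry such that neither 1 nor -1 is an eigenvalue of A (i.e. ker(A - id) = ker(A + id) = {0}). Then every linear isometry g : E → E that commutes with A (g∘A = A∘g) has determinant 1. -/
/-!
A real endomorphism without eigenvalues `≤ 0` has positive determinant: along the segment from
the identity to it the determinant never vanishes. Applied to `f` and `-f`, this shows that a map
without real eigenvalues lives in even dimension.

Let `V` be the `-1`-eigenspace of `g`. It is `A`-invariant, and `A` restricted to `V` is an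
isometry without the eigenvalues `±1`, hence without real eigenvalues, so `dim V` is even and
`det (g|V) = (-1) ^ dim V = 1`. On `Vᗮ` the only real eigenvalue of `g` is `1`, so
`det (g|Vᗮ) > 0`. Hence `det g > 0`, while `|det g| = 1`.
-/

open Module Module.End

section Determinant

variable {M : Type*} [AddCommGroup M] [Module ℝ M] [FiniteDimensional ℝ M]

theorem LinearMap.det_pos_of_forall_hasEigenvalue_pos (f : End ℝ M)
    (hf : ∀ μ, HasEigenvalue f μ → 0 < μ) : 0 < LinearMap.det f := by
  let path : ℝ → ℝ := fun t ↦ LinearMap.det (t • f + (1 - t) • 1)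
  have hcont : Continuous path := by
    let b := Module.finBasis ℝ M
    have : path = fun t ↦ (t • LinearMap.toMatrix b b f + (1 - t) • 1).det := by
      ext t
      simp [path, ← LinearMap.det_toMatrix b]
    rw [this]
    fun_prop
  have hne : ∀ t ∈ Set.Icc (0 : ℝ) 1, path t ≠ 0 := by
    rintro t ⟨ht0, ht1⟩ hdet
    obtain ⟨x, hx0, hx⟩ := ((hasEigenvalue_zero_tfae _).out 3 5).mp hdet
    obtain rfl | ht0 := ht0.eq_or_lt
    · simp_all
    have hμ : HasEigenvalue f (-((1 - t) / t)) := by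
      refine hasEigenvalue_of_hasEigenvector ⟨mem_eigenspace_iff.mpr ?_, hx0⟩
      simp only [LinearMap.add_apply, LinearMap.smul_apply, one_apply] at hx
      apply smul_right_injective M ht0.ne'
      dsimp only
      rw [smul_smul, mul_neg, mul_div_cancel₀ _ ht0.ne', neg_smul, eq_neg_iff_add_eq_zero, hx]
    have : 0 ≤ (1 - t) / t := div_nonneg (by linarith) ht0.le
    linarith [hf _ hμ]
  by_contra! hdet
  have h0 : path 0 = 1 := by simp [path]
  have h1 : path 1 = LinearMap.det f := by simp [path]
  obtain ⟨t, ht, hzero⟩ := intermediate_value_Icc' zero_le_one hcont.continuousOn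
    (show (0 : ℝ) ∈ Set.Icc (path 1) (path 0) by rw [h0, h1]; exact ⟨hdet, zero_le_one⟩)
  exact hne t ht hzero

theorem Module.End.even_finrank_of_forall_not_hasEigenvalue (f : End ℝ M)
    (hf : ∀ μ, ¬ HasEigenvalue f μ) : Even (finrank ℝ M) := by
  have hpos := LinearMap.det_pos_of_forall_hasEigenvalue_pos f fun μ hμ ↦ (hf μ hμ).elim
  have hneg := LinearMap.det_pos_of_forall_hasEigenvalue_pos (-f) fun μ hμ ↦
    (hf (-μ) (hasEigenvalue_neg_iff.mp hμ)).elim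
  rw [← neg_one_smul ℝ f, LinearMap.det_smul] at hneg
  by_contra hodd
  rw [(Nat.not_even_iff_odd.mp hodd).neg_one_pow] at hneg
  linarith

end Determinant

theorem LinearMap.det_eq_det_restrict_mul_det_restrict {K M : Type*} [Field K]
    [AddCommGroup M] [Module K M] [FiniteDimensional K M] {V W : Submodule K M} (hVW : IsCompl V W)
    (f : End K M) (hV : ∀ x ∈ V, f x ∈ V) (hW : ∀ x ∈ W, f x ∈ W) :
    LinearMap.det f = LinearMap.det (f.restrict hV) * LinearMap.det (f.restrict hW) := by
  let e := Submodule.prodEquivOfIsCompl V W hVW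
  have hf : f = (e : V × W →ₗ[K] M) ∘ₗ (f.restrict hV).prodMap (f.restrict hW) ∘ₗ
      (e.symm : M →ₗ[K] V × W) := by
    ext x
    obtain ⟨z, rfl⟩ := e.surjective x
    simp [e]
  conv_lhs => rw [hf]
  rw [LinearMap.det_conj, LinearMap.det_prodMap]

theorem Module.End.HasEigenvalue.of_restrict {R M : Type*} [CommRing R] [AddCommGroup M]
    [Module R M] {f : End R M} {p : Submodule R M} {hfp : ∀ x ∈ p, f x ∈ p} {μ : R}
    (h : HasEigenvalue (f.restrict hfp) μ) : HasEigenvalue f μ := by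
  obtain ⟨x, hx, hx0⟩ := h.exists_hasEigenvector
  exact hasEigenvalue_of_hasEigenvector
    ⟨eigenspace_restrict_le_eigenspace f hfp μ ⟨x, hx, rfl⟩, by simpa using hx0⟩

theorem LinearIsometry.norm_eq_one_of_hasEigenvalue {𝕜 E : Type*} [NormedField 𝕜]
    [NormedAddCommGroup E] [NormedSpace 𝕜 E] (f : E →ₗᵢ[𝕜] E) {μ : 𝕜}
    (h : HasEigenvalue f.toLinearMap μ) : ‖μ‖ = 1 := by
  obtain ⟨x, hx, hx0⟩ := h.exists_hasEigenvector
  refine mul_right_cancel₀ (norm_ne_zero_iff.mpr hx0) ?_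
  calc ‖μ‖ * ‖x‖ = ‖f x‖ := by rw [← norm_smul, ← mem_eigenspace_iff.mp hx]; rfl
    _ = 1 * ‖x‖ := by rw [f.norm_map, one_mul]

theorem LinearIsometry.eq_one_or_eq_neg_one_of_hasEigenvalue {E : Type*} [NormedAddCommGroup E]
    [NormedSpace ℝ E] (f : E →ₗᵢ[ℝ] E) {μ : ℝ} (h : HasEigenvalue f.toLinearMap μ) :
    μ = 1 ∨ μ = -1 := by
  simpa [abs_eq zero_le_one] using f.norm_eq_one_of_hasEigenvalue h

theorem LinearIsometry.mapsTo_orthogonal_eigenspace {𝕜 E : Type*} [RCLike 𝕜]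
    [NormedAddCommGroup E] [InnerProductSpace 𝕜 E] (f : E →ₗᵢ[𝕜] E) (μ : 𝕜) :
    ∀ x ∈ (eigenspace f.toLinearMap μ)ᗮ, f x ∈ (eigenspace f.toLinearMap μ)ᗮ := by
  intro x hx u hu
  have hfu : f u = μ • u := mem_eigenspace_iff.mp hu
  have : (starRingEnd 𝕜) μ * inner 𝕜 u (f x) = 0 := by
    rw [← inner_smul_left, ← hfu, f.inner_map_map, hx u hu]
  rcases mul_eq_zero.mp this with hμ | h
  · rw [map_eq_zero] at hμ
    rw [hμ, zero_smul] at hfu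
    obtain rfl : u = 0 := by simpa using congrArg norm hfu
    exact inner_zero_left _
  · exact h

theorem stmt_2_general {E : Type*} [NormedAddCommGroup E] [InnerProductSpace ℝ E]
    [FiniteDimensional ℝ E]
    (A g : E →ₗᵢ[ℝ] E)
    (h1 : LinearMap.ker (A.toLinearMap - LinearMap.id) = ⊥)
    (h2 : LinearMap.ker (A.toLinearMap + LinearMap.id) = ⊥)
    (hcomm : g.toLinearMap ∘ₗ A.toLinearMap = A.toLinearMap ∘ₗ g.toLinearMap) :
    LinearMap.det g.toLinearMap = 1 := by
  set V := eigenspace g.toLinearMap (-1)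
  have hAV : ∀ x ∈ V, A x ∈ V :=
    mapsTo_genEigenspace_of_comm (f := g.toLinearMap) (g := A.toLinearMap) hcomm (-1) 1
  have hgV : ∀ x ∈ V, g x ∈ V := fun _ hx ↦ eigenspace_mem_invtSubmodule _ _ hx
  have hgW : ∀ x ∈ Vᗮ, g x ∈ Vᗮ := g.mapsTo_orthogonal_eigenspace (-1)
  have hA : ∀ μ, ¬ HasEigenvalue (A.toLinearMap.restrict hAV) μ := by
    intro μ hμ
    rcases A.eq_one_or_eq_neg_one_of_hasEigenvalue hμ.of_restrict with rfl | rfl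
    · exact hμ.of_restrict (by simpa [eigenspace_def, one_eq_id] using h1)
    · exact hμ.of_restrict (by simpa [eigenspace_def, one_eq_id] using h2)
  have hdetV : 0 < LinearMap.det (g.toLinearMap.restrict hgV) := by
    rw [show g.toLinearMap.restrict hgV = (-1 : ℝ) • LinearMap.id from restrict_eigenspace _ _,
      LinearMap.det_smul, LinearMap.det_id, mul_one,
      (even_finrank_of_forall_not_hasEigenvalue _ hA).neg_one_pow]
    exact one_pos
  have hdetW : 0 < LinearMap.det (g.toLinearMap.restrict hgW) := by
    refine LinearMap.det_pos_of_forall_hasEigenvalue_pos _ fun μ hμ ↦ ?_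
    rcases g.eq_one_or_eq_neg_one_of_hasEigenvalue hμ.of_restrict with rfl | rfl
    · exact one_pos
    · exact absurd (eigenspace_restrict_eq_bot hgW V.orthogonal_disjoint) hμ
  have hdet : 0 < LinearMap.det g.toLinearMap := by
    rw [LinearMap.det_eq_det_restrict_mul_det_restrict V.isCompl_orthogonal _ hgV hgW]
    positivity
  have hnorm : ‖LinearMap.det g.toLinearMap‖ = 1 := by
    rw [← LinearMap.normDet_eq_norm_det, g.normDet_eq_one]
  rwa [Real.norm_of_nonneg hdet.le] at hnorm

/-- Let `E` be a nonzero finite-dimensional real inner product space and `A` a linear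
isometry of `E` such that neither `1` nor `-1` is an eigenvalue of `A`
(`ker (A - id) = ker (A + id) = ⊥`).  Then every linear isometry `g` of `E`
commuting with `A` has determinant `1`. -/
theorem stmt_2 {E : Type*} [NormedAddCommGroup E] [InnerProductSpace ℝ E]
    [FiniteDimensional ℝ E] [Nontrivial E]
    (A g : E →ₗᵢ[ℝ] E)
    (h1 : LinearMap.ker (A.toLinearMap - LinearMap.id) = ⊥)
    (h2 : LinearMap.ker (A.toLinearMap + LinearMap.id) = ⊥)
    (hcomm : g.toLinearMap ∘ₗ A.toLinearMap = A.toLinearMap ∘ₗ g.toLinearMap) :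
    LinearMap.det g.toLinearMap = 1 :=
  stmt_2_general A g h1 h2 hcomm
end

section
/- With the above notation: 𝔥 is the internal direct sum 𝔤₀ ⊕ 𝔤_k, 𝔤 is the internal direct sum 𝔥 ⊕ 𝔪, τ(𝔪) = 𝔪, and [𝔥, 𝔪] ⊆ 𝔪, so every ξ ∈ 𝔥 induces an endomorphism ad_𝔪 ξ : 𝔪 → 𝔪, Y ↦ [ξ, Y]. Assume moreover that the pair (𝔤, 𝔥) is effective, i.e. the only ξ ∈ 𝔥 with [ξ, Y] = 0 for all Y ∈ 𝔪 is ξ = 0. Then 𝔤₀ = {ξ ∈ 𝔥 : ad_𝔪 ξ ∘ τ|_𝔪 = τ|_𝔪 ∘ ad_𝔪 ξ} and 𝔤_k = {ξ ∈ 𝔥 : ad_𝔪 ξ ∘ τ|_𝔪 = -τ|_𝔪 ∘ ad_𝔪 ξ}. -/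
/-! The decompositions are linear algebra of polynomials in `τ`. For coprime `p, q` with
`p(f) q(f) = 0`, a Bézout identity splits the space as `ker p(f) ⊕ range p(f)`; this applies to
`p = X - 1`, `q = X + 1` (coprime as `2` is invertible), giving `𝔥 = 𝔤₀ ⊕ 𝔤_k`, and to `f = τ²`,
`p = X - 1`, `q = 1 + X + ⋯ + X^(k-1)` (coprime as `q(1) = k ≠ 0`), giving `𝔤 = 𝔥 ⊕ 𝔪`.

For `ξ ∈ 𝔥` we have `⁅ξ, τ Y⁆ = τ ⁅τ ξ, Y⁆`, so `ad_𝔪 ξ ∘ τ = ± τ ∘ ad_𝔪 ξ` says exactly that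
`τ ξ ∓ ξ ∈ 𝔥` acts trivially on `𝔪`; by effectiveness this means `τ ξ = ± ξ`. -/

open Polynomial LinearMap

namespace Polynomial

variable {R M : Type*} [CommRing R] [AddCommGroup M] [Module R M]

theorem isCompl_ker_range_aeval_of_isCoprime {f : Module.End R M} {p q : R[X]}
    (hpq : IsCoprime p q) (hf : aeval f (p * q) = 0) :
    IsCompl (ker (aeval f p)) (range (aeval f p)) := by
  obtain ⟨a, b, hab⟩ := hpq
  have hsplit (x : M) : aeval f a (aeval f p x) + aeval f b (aeval f q x) = x := by
    simpa using congr($(congrArg (aeval f) hab) x)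
  constructor
  · rw [disjoint_iff_inf_le]
    rintro _ ⟨hx, y, rfl⟩
    have hqp : aeval f q (aeval f p y) = 0 := by
      simpa [mul_comm p q] using congr($hf y)
    rw [Submodule.mem_bot, ← hsplit (aeval f p y), mem_ker.mp hx, hqp, map_zero, map_zero,
      add_zero]
  · rw [codisjoint_iff_le_sup]
    intro x _
    have hpa : aeval f a (aeval f p x) = aeval f p (aeval f a x) := by
      simp only [← Module.End.mul_apply, ← map_mul, mul_comm a p]
    have hpbq : aeval f p (aeval f b (aeval f q x)) = 0 := by
      rw [← Module.End.mul_apply, ← Module.End.mul_apply, ← map_mul, ← map_mul, mul_right_comm,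
        map_mul, hf, zero_mul, LinearMap.zero_apply]
    rw [← hsplit x, hpa, add_comm]
    exact Submodule.add_mem_sup hpbq ⟨_, rfl⟩

theorem isCoprime_X_sub_one_geom_sum {n : ℕ} (hn : IsUnit (n : R)) :
    IsCoprime (X - 1 : R[X]) (∑ i ∈ Finset.range n, X ^ i) := by
  obtain ⟨g, hg⟩ := X_sub_C_dvd_sub_C_eval (a := (1 : R)) (p := ∑ i ∈ Finset.range n, X ^ i)
  rw [eval_geom_sum, one_geom_sum, sub_eq_iff_eq_add, C_1] at hg
  rw [hg]
  refine IsCoprime.mul_add_left_right ?_ g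
  simpa using (isCoprime_mul_unit_left_right (hn.map C) (X - 1) 1).mpr isCoprime_one_right

theorem isCoprime_X_sub_one_X_add_one (h2 : IsUnit (2 : R)) :
    IsCoprime (X - C 1 : R[X]) (X - C (-1)) :=
  isCoprime_X_sub_C_of_isUnit_sub (by rwa [sub_neg_eq_add, one_add_one_eq_two])

end Polynomial

namespace Module.End

variable {R M : Type*} [CommRing R] [AddCommGroup M] [Module R M]

theorem isCompl_ker_range_sub_one_of_pow_eq_one {f : Module.End R M} {n : ℕ}
    (hn : IsUnit (n : R)) (hf : f ^ n = 1) :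
    IsCompl (ker (f - 1)) (range (f - 1)) := by
  have h := isCompl_ker_range_aeval_of_isCoprime (f := f) (isCoprime_X_sub_one_geom_sum hn)
    (by rw [mul_geom_sum, map_sub, map_pow, aeval_X, map_one, hf, sub_self])
  simpa using h

theorem sup_ker_sub_one_ker_add_one (f : Module.End R M) (h2 : IsUnit (2 : R)) :
    ker (f - 1) ⊔ ker (f + 1) = ker (f * f - 1) := by
  have h := sup_ker_aeval_eq_ker_aeval_mul_of_coprime f (isCoprime_X_sub_one_X_add_one h2)
  simp only [map_sub, map_add, map_mul, aeval_X, map_neg, map_one, sub_neg_eq_add] at h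
  rwa [mul_add, sub_mul, sub_mul, mul_one, one_mul, one_mul, sub_add_sub_cancel] at h

theorem disjoint_ker_sub_one_ker_add_one (f : Module.End R M) (h2 : IsUnit (2 : R)) :
    Disjoint (ker (f - 1)) (ker (f + 1)) := by
  simpa using disjoint_ker_aeval_of_isCoprime f (isCoprime_X_sub_one_X_add_one h2)

theorem map_range_of_commute {f g : Module.End R M} (hfg : Commute f g)
    (hf : Function.Surjective f) : (range g).map f = range g := by
  rw [← range_comp, ← Module.End.mul_eq_comp, hfg.eq, Module.End.mul_eq_comp, range_comp,
    range_eq_top.mpr hf, Submodule.map_top]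

end Module.End

namespace LieHom

variable {R L : Type*} [CommRing R] [LieRing L] [LieAlgebra R L]

theorem lie_mem_range_sub_one {σ : L →ₗ⁅R⁆ L} {ξ y : L} (hξ : σ ξ = ξ)
    (hy : y ∈ LinearMap.range ((σ : L →ₗ[R] L) - 1)) :
    ⁅ξ, y⁆ ∈ LinearMap.range ((σ : L →ₗ[R] L) - 1) := by
  obtain ⟨z, rfl⟩ := hy
  refine ⟨⁅ξ, z⁆, ?_⟩
  simp [lie_sub, hξ]

end LieHom

namespace LieEquiv

variable {R L : Type*} [CommRing R] [LieRing L] [LieAlgebra R L]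

theorem lie_apply_eq_apply_lie_apply (τ : L ≃ₗ⁅R⁆ L) {ξ : L} (hξ : τ (τ ξ) = ξ) (y : L) :
    ⁅ξ, τ y⁆ = τ ⁅τ ξ, y⁆ := by
  rw [map_lie, hξ]

theorem apply_eq_smul_iff_forall_lie_apply (τ : L ≃ₗ⁅R⁆ L) {h m : Submodule R L}
    (heff : ∀ ξ ∈ h, (∀ y ∈ m, ⁅ξ, y⁆ = 0) → ξ = 0) (mem_h : ∀ x, x ∈ h ↔ τ (τ x) = x)
    {c : R} (hc : c * c = 1) (ξ : L) :
    τ ξ = c • ξ ↔ ξ ∈ h ∧ ∀ y ∈ m, ⁅ξ, τ y⁆ = c • τ ⁅ξ, y⁆ := by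
  refine ⟨fun hξ ↦ ?_, fun ⟨hξ, hlie⟩ ↦ ?_⟩
  · have hinv : τ (τ ξ) = ξ := by rw [hξ, map_smul, hξ, smul_smul, hc, one_smul]
    refine ⟨(mem_h ξ).mpr hinv, fun y _ ↦ ?_⟩
    rw [lie_apply_eq_apply_lie_apply τ hinv, hξ, smul_lie, map_smul]
  · have hinv := (mem_h ξ).mp hξ
    have hτξ := (mem_h (τ ξ)).mpr (by rw [hinv])
    refine sub_eq_zero.mp (heff _ (h.sub_mem hτξ (h.smul_mem c hξ)) fun y hy ↦ τ.injective ?_)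
    rw [sub_lie, smul_lie, map_sub, map_smul, map_zero, LieEquiv.coe_coe,
      ← lie_apply_eq_apply_lie_apply τ hinv, hlie y hy, sub_self]

end LieEquiv

/-- Let `𝔤` be a real Lie algebra, `k ≥ 1`, and `τ` a Lie algebra automorphism of `𝔤`
with `τ^{2k} = id`.  Set `𝔤₀ := ker (τ - id)`, `𝔤_k := ker (τ + id)`,
`𝔥 := ker (τ∘τ - id)` and `𝔪 := range (τ∘τ - id)`.  Then `𝔥 = 𝔤₀ ⊕ 𝔤_k` and
`𝔤 = 𝔥 ⊕ 𝔪` (internal direct sums), `τ(𝔪) = 𝔪`, and `⁅𝔥, 𝔪⁆ ⊆ 𝔪`, so each `ξ ∈ 𝔥`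
induces `ad_𝔪 ξ : 𝔪 → 𝔪, Y ↦ ⁅ξ, Y⁆`.  If moreover `(𝔤, 𝔥)` is effective (the only
`ξ ∈ 𝔥` with `⁅ξ, Y⁆ = 0` for all `Y ∈ 𝔪` is `ξ = 0`), then
`𝔤₀ = {ξ ∈ 𝔥 : ad_𝔪 ξ ∘ τ|_𝔪 = τ|_𝔪 ∘ ad_𝔪 ξ}` and
`𝔤_k = {ξ ∈ 𝔥 : ad_𝔪 ξ ∘ τ|_𝔪 = -τ|_𝔪 ∘ ad_𝔪 ξ}`. -/
theorem stmt_8 {L : Type*} [LieRing L] [LieAlgebra ℝ L]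
    (k : ℕ) (hk : 1 ≤ k) (τ : L ≃ₗ⁅ℝ⁆ L)
    (hτ : (τ.toLieHom.toLinearMap : Module.End ℝ L) ^ (2 * k) = 1)
    (g0 gk h m : Submodule ℝ L)
    (hg0 : g0 = LinearMap.ker ((τ.toLieHom.toLinearMap : Module.End ℝ L) - 1))
    (hgk : gk = LinearMap.ker ((τ.toLieHom.toLinearMap : Module.End ℝ L) + 1))
    (hh : h = LinearMap.ker
      ((τ.toLieHom.toLinearMap : Module.End ℝ L) * τ.toLieHom.toLinearMap - 1))
    (hm : m = LinearMap.range
      ((τ.toLieHom.toLinearMap : Module.End ℝ L) * τ.toLieHom.toLinearMap - 1))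
    (heff : ∀ ξ ∈ h, (∀ Y ∈ m, ⁅ξ, Y⁆ = (0 : L)) → ξ = 0) :
    (g0 ⊔ gk = h ∧ g0 ⊓ gk = ⊥) ∧
    (h ⊔ m = ⊤ ∧ h ⊓ m = ⊥) ∧
    Submodule.map (τ.toLieHom.toLinearMap : Module.End ℝ L) m = m ∧
    (∀ ξ ∈ h, ∀ Y ∈ m, ⁅ξ, Y⁆ ∈ m) ∧
    (g0 : Set L) = {ξ | ξ ∈ h ∧ ∀ Y ∈ m, ⁅ξ, τ Y⁆ = τ ⁅ξ, Y⁆} ∧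
    (gk : Set L) = {ξ | ξ ∈ h ∧ ∀ Y ∈ m, ⁅ξ, τ Y⁆ = -τ ⁅ξ, Y⁆} := by
  subst hg0 hgk hh hm
  have mem_h (x : L) : x ∈ LinearMap.ker
      ((τ.toLieHom.toLinearMap : Module.End ℝ L) * τ.toLieHom.toLinearMap - 1) ↔ τ (τ x) = x := by
    simp [sub_eq_zero]
  have hcompl := Module.End.isCompl_ker_range_sub_one_of_pow_eq_one
    (f := (τ.toLieHom.toLinearMap : Module.End ℝ L) * τ.toLieHom.toLinearMap) (n := k)
    (Nat.cast_ne_zero.mpr (by omega : k ≠ 0)).isUnit (by rw [← sq, ← pow_mul, hτ])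
  have h2 : IsUnit (2 : ℝ) := two_ne_zero.isUnit
  refine ⟨⟨Module.End.sup_ker_sub_one_ker_add_one _ h2,
    (Module.End.disjoint_ker_sub_one_ker_add_one _ h2).eq_bot⟩,
    ⟨hcompl.sup_eq_top, hcompl.inf_eq_bot⟩, Module.End.map_range_of_commute ?_ τ.surjective,
    fun ξ hξ Y hY ↦ ?_, Set.ext fun ξ ↦ ?_, Set.ext fun ξ ↦ ?_⟩
  · exact ((Commute.refl _).mul_right (Commute.refl _)).sub_right (Commute.one_right _)
  · exact LieHom.lie_mem_range_sub_one (σ := τ.toLieHom.comp τ.toLieHom) ((mem_h ξ).mp hξ) hY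
  · have h := τ.apply_eq_smul_iff_forall_lie_apply heff mem_h (one_mul 1) ξ
    simp only [one_smul] at h
    rw [SetLike.mem_coe, LinearMap.mem_ker, LinearMap.sub_apply, sub_eq_zero]
    exact h
  · have h := τ.apply_eq_smul_iff_forall_lie_apply heff mem_h (by norm_num : (-1 : ℝ) * -1 = 1) ξ
    simp only [neg_one_smul] at h
    rw [SetLike.mem_coe, LinearMap.mem_ker, LinearMap.add_apply, add_eq_zero_iff_eq_neg]
    exact h
end

section
/- With the above notation, suppose that (τ|_𝔪)^k = -id_𝔪 (note τ(𝔪) = 𝔪, so τ|_𝔪 makes sense). Then [𝔪, 𝔪] ⊆ 𝔥, i.e. the bracket of any two elements of 𝔪 lies in ker(τ∘τ - id). -/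
/-!
`τ ^ k` is a Lie automorphism fixing `⁅x, y⁆` for `x, y ∈ 𝔪`, since it negates both. It commutes
with `τ ∘ τ - id` and negates its range `𝔪`, so for `z := ⁅x, y⁆` the vector `(τ ∘ τ - id) z` is both
fixed and negated by `τ ^ k`, hence zero.
-/

open LinearMap in
theorem Module.End.mem_ker_of_commute_of_eq_neg_on_range {R M : Type*} [Semiring R]
    [AddCommGroup M] [Module R M] [IsAddTorsionFree M] {u B : Module.End R M}
    (hcomm : Commute u B) (hneg : ∀ x ∈ range B, u x = -x) {z : M} (hz : u z = z) :
    z ∈ ker B := by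
  have : B z = -B z := calc
    B z = B (u z) := by rw [hz]
    _ = u (B z) := LinearMap.congr_fun hcomm.symm z
    _ = -B z := hneg _ (mem_range_self B z)
  exact self_eq_neg.mp this

theorem LieHom.toLinearMap_pow_apply_lie {R L : Type*} [CommRing R] [LieRing L]
    [LieAlgebra R L] (f : L →ₗ⁅R⁆ L) (n : ℕ) (x y : L) :
    ((f : Module.End R L) ^ n) ⁅x, y⁆ =
      ⁅((f : Module.End R L) ^ n) x, ((f : Module.End R L) ^ n) y⁆ := by
  induction n with
  | zero => rfl
  | succ n ih => simp only [pow_succ', Module.End.mul_apply, ih, coe_toLinearMap, f.map_lie]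

theorem stmt_9_general {L : Type*} [LieRing L] [LieAlgebra ℝ L]
    (k : ℕ) (τ : L ≃ₗ⁅ℝ⁆ L)
    (h m : Submodule ℝ L)
    (hh : h = LinearMap.ker
      ((τ.toLieHom.toLinearMap : Module.End ℝ L) * τ.toLieHom.toLinearMap - 1))
    (hm : m = LinearMap.range
      ((τ.toLieHom.toLinearMap : Module.End ℝ L) * τ.toLieHom.toLinearMap - 1))
    (hτm : ∀ x ∈ m, ((τ.toLieHom.toLinearMap : Module.End ℝ L) ^ k) x = -x) :
    ∀ x ∈ m, ∀ y ∈ m, ⁅x, y⁆ ∈ h := by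
  intro x hx y hy
  have := IsAddTorsionFree.of_isTorsionFree ℝ L
  set f : Module.End ℝ L := τ.toLieHom.toLinearMap
  have hcomm : Commute (f ^ k) (f * f - 1) :=
    (((Commute.refl f).pow_left k).mul_right ((Commute.refl f).pow_left k)).sub_right
      (Commute.one_right _)
  subst hh
  refine Module.End.mem_ker_of_commute_of_eq_neg_on_range hcomm (fun w hw => hτm w (hm ▸ hw)) ?_
  rw [τ.toLieHom.toLinearMap_pow_apply_lie, hτm x hx, hτm y hy, neg_lie, lie_neg, neg_neg]

/-- Let `𝔤` be a real Lie algebra, `k ≥ 1`, and `τ` a Lie algebra automorphism of `𝔤`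
with `τ^{2k} = id`.  Set `𝔥 := ker (τ∘τ - id)` and `𝔪 := range (τ∘τ - id)`.  If
`(τ|_𝔪)^k = -id_𝔪` (note `τ(𝔪) = 𝔪`), then `⁅𝔪, 𝔪⁆ ⊆ 𝔥`: the bracket of any two
elements of `𝔪` lies in `ker (τ∘τ - id)`. -/
theorem stmt_9 {L : Type*} [LieRing L] [LieAlgebra ℝ L]
    (k : ℕ) (hk : 1 ≤ k) (τ : L ≃ₗ⁅ℝ⁆ L)
    (hτ : (τ.toLieHom.toLinearMap : Module.End ℝ L) ^ (2 * k) = 1)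
    (h m : Submodule ℝ L)
    (hh : h = LinearMap.ker
      ((τ.toLieHom.toLinearMap : Module.End ℝ L) * τ.toLieHom.toLinearMap - 1))
    (hm : m = LinearMap.range
      ((τ.toLieHom.toLinearMap : Module.End ℝ L) * τ.toLieHom.toLinearMap - 1))
    (hτm : ∀ x ∈ m, ((τ.toLieHom.toLinearMap : Module.End ℝ L) ^ k) x = -x) :
    ∀ x ∈ m, ∀ y ∈ m, ⁅x, y⁆ ∈ h :=
  stmt_9_general k τ h m hh hm hτm
end

section
/- With the above notation, suppose that k is odd, that (τ|_𝔪)^k = -id_𝔪 (note τ(𝔪) = 𝔪), and that the pair (𝔤, 𝔥) is effective, i.e. the only ξ ∈ 𝔥 with [ξ, Y] = 0 for all Y ∈ 𝔪 is ξ = 0. Then 𝔤_k = ker(τ + id) = {0} (the trivial case). -/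
/-!
An element `x` with `τ x = -x` is fixed by `τ²`, so it lies in `𝔥`, and `ad x` commutes with
`τ² - 1`, so it preserves `𝔪`. For `Y ∈ 𝔪`, applying `τᵏ` to `⁅x, Y⁆ ∈ 𝔪` gives `-⁅x, Y⁆`, while
`τᵏ x = -x` (as `k` is odd) and `τᵏ Y = -Y` give `⁅-x, -Y⁆ = ⁅x, Y⁆`. Hence `ad x` kills `𝔪`,
and effectiveness forces `x = 0`.
-/

namespace Module.End

variable {R M : Type*} [CommRing R] [AddCommGroup M] [Module R M]

lemma pow_apply_of_apply_eq_neg {T : Module.End R M} {x : M} (hx : T x = -x) (n : ℕ) :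
    (T ^ n) x = ((-1 : R) ^ n) • x := by
  induction n with
  | zero => simp
  | succ n ih => rw [pow_succ', mul_apply, ih, map_smul, hx, pow_succ, mul_smul, neg_one_smul,
      smul_neg]

lemma pow_apply_of_apply_eq_neg_of_odd {T : Module.End R M} {x : M} (hx : T x = -x) {n : ℕ}
    (hn : Odd n) : (T ^ n) x = -x := by
  rw [pow_apply_of_apply_eq_neg hx, hn.neg_one_pow, neg_one_smul]

end Module.End

namespace LieHom

variable {R L : Type*} [CommRing R] [LieRing L] [LieAlgebra R L]

lemma toLinearMap_pow_apply_lie_s10 (f : L →ₗ⁅R⁆ L) (n : ℕ) (a b : L) :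
    ((f : Module.End R L) ^ n) ⁅a, b⁆ =
      ⁅((f : Module.End R L) ^ n) a, ((f : Module.End R L) ^ n) b⁆ := by
  induction n generalizing a b with
  | zero => rfl
  | succ n ih => rw [pow_succ', Module.End.mul_apply, ih, Module.End.mul_apply,
      Module.End.mul_apply, coe_toLinearMap, f.map_lie]

lemma lie_mem_range_sub_one_of_apply_eq_self (f : L →ₗ⁅R⁆ L) {x y : L} (hx : f x = x)
    (hy : y ∈ LinearMap.range ((f : Module.End R L) - 1)) :
    ⁅x, y⁆ ∈ LinearMap.range ((f : Module.End R L) - 1) := by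
  obtain ⟨z, rfl⟩ := hy
  refine ⟨⁅x, z⁆, ?_⟩
  simp only [LinearMap.sub_apply, Module.End.one_apply, coe_toLinearMap, f.map_lie, hx, lie_sub]

end LieHom

theorem stmt_10_general {L : Type*} [LieRing L] [LieAlgebra ℝ L]
    (k : ℕ) (hodd : Odd k) (τ : L ≃ₗ⁅ℝ⁆ L)
    (gk h m : Submodule ℝ L)
    (hgk : gk = LinearMap.ker ((τ.toLieHom.toLinearMap : Module.End ℝ L) + 1))
    (hh : h = LinearMap.ker
      ((τ.toLieHom.toLinearMap : Module.End ℝ L) * τ.toLieHom.toLinearMap - 1))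
    (hm : m = LinearMap.range
      ((τ.toLieHom.toLinearMap : Module.End ℝ L) * τ.toLieHom.toLinearMap - 1))
    (hτm : ∀ x ∈ m, ((τ.toLieHom.toLinearMap : Module.End ℝ L) ^ k) x = -x)
    (heff : ∀ ξ ∈ h, (∀ Y ∈ m, ⁅ξ, Y⁆ = (0 : L)) → ξ = 0) :
    gk = ⊥ := by
  set T : Module.End ℝ L := τ.toLieHom.toLinearMap
  rw [Submodule.eq_bot_iff, hgk]
  intro x hx
  have hTx : T x = -x := eq_neg_of_add_eq_zero_left hx
  have hTTx : (T * T) x = x := by rw [Module.End.mul_apply, hTx, map_neg, hTx, neg_neg]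
  refine heff x (by rw [hh, LinearMap.mem_ker, LinearMap.sub_apply, hTTx, Module.End.one_apply,
    sub_self]) fun Y hY ↦ ?_
  have hxY : ⁅x, Y⁆ ∈ m := by
    rw [hm] at hY ⊢
    exact (τ.toLieHom.comp τ.toLieHom).lie_mem_range_sub_one_of_apply_eq_self hTTx hY
  have hsymm : ⁅x, Y⁆ = -⁅x, Y⁆ := by
    rw [← hτm _ hxY, τ.toLieHom.toLinearMap_pow_apply_lie_s10,
      Module.End.pow_apply_of_apply_eq_neg_of_odd hTx hodd, hτm Y hY, neg_lie, lie_neg, neg_neg]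
  have := IsAddTorsionFree.of_isTorsionFree ℝ L
  exact self_eq_neg.mp hsymm

/-- Let `𝔤` be a real Lie algebra, `k ≥ 1` odd, and `τ` a Lie algebra automorphism of
`𝔤` with `τ^{2k} = id`.  Set `𝔤_k := ker (τ + id)`, `𝔥 := ker (τ∘τ - id)` and
`𝔪 := range (τ∘τ - id)`.  If `(τ|_𝔪)^k = -id_𝔪` and `(𝔤, 𝔥)` is effective (the only
`ξ ∈ 𝔥` with `⁅ξ, Y⁆ = 0` for all `Y ∈ 𝔪` is `ξ = 0`), then `𝔤_k = {0}`
(the trivial case). -/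
theorem stmt_10 {L : Type*} [LieRing L] [LieAlgebra ℝ L]
    (k : ℕ) (hk : 1 ≤ k) (hodd : Odd k) (τ : L ≃ₗ⁅ℝ⁆ L)
    (hτ : (τ.toLieHom.toLinearMap : Module.End ℝ L) ^ (2 * k) = 1)
    (gk h m : Submodule ℝ L)
    (hgk : gk = LinearMap.ker ((τ.toLieHom.toLinearMap : Module.End ℝ L) + 1))
    (hh : h = LinearMap.ker
      ((τ.toLieHom.toLinearMap : Module.End ℝ L) * τ.toLieHom.toLinearMap - 1))
    (hm : m = LinearMap.range
      ((τ.toLieHom.toLinearMap : Module.End ℝ L) * τ.toLieHom.toLinearMap - 1))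
    (hτm : ∀ x ∈ m, ((τ.toLieHom.toLinearMap : Module.End ℝ L) ^ k) x = -x)
    (heff : ∀ ξ ∈ h, (∀ Y ∈ m, ⁅ξ, Y⁆ = (0 : L)) → ξ = 0) :
    gk = ⊥ :=
  stmt_10_general k hodd τ gk h m hgk hh hm hτm heff
end

section
/- Suppose E decomposes as an internal direct sum E = E⁺ ⊕ E⁻ with J(E⁺) ⊆ E⁺ and J(E⁻) ⊆ E⁻. Let B : E × E → E be an ℝ-bilinear map such that, writing B^{**} := B - B^{-,-} and using sign multiplication on {+,-}: B^{**}(X,Y) ∈ E^{αα'} and B^{-,-}(X,Y) ∈ E^{-αα'} whenever X ∈ E^α and Y ∈ E^{α'}, for all α, α' ∈ {+,-}. Define J^⋆ ∈ End(E) by J^⋆ = J on E⁺ and J^⋆ = -J on E⁻. Then J^⋆ ∘ J^⋆ = -id and J⋆B = J^⋆·B, i.e. (J⋆B)(X,Y) = -J^⋆(B(J^⋆X, J^⋆Y)) for all X, Y ∈ E. -/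
/-!
By bilinearity of both sides it suffices to take `X ∈ E^α`, `Y ∈ E^{α'}`. The twist `K = J^⋆`
gives `KX = αJX` and `KY = α'JY`, so `B(KX, KY) = αα' B(JX, JY)`; the hypothesis splits
`B(JX, JY)` as `B^{**} + B^{--}` with summands in `E^{αα'}` and `E^{-αα'}`, on which `K` acts as
`αα'J` and `-αα'J`. The signs cancel and `-K B(KX, KY) = -J B(JX, JY) + 2 J B^{--}(JX, JY)`,
which equals `(J⋆B)(X, Y)` by expanding `B^{--}` with `J² = -1`.
-/

section

variable {E : Type*} [AddCommGroup E] [Module ℝ E]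

/-- The action `(J·B)(X,Y) = -J(B(JX,JY))`. -/
def Jdot (J : E →ₗ[ℝ] E) (B : E → E → E) : E → E → E :=
  fun X Y => -J (B (J X) (J Y))

/-- The action `(J⟲B)(X,Y) = B(JX,Y) + B(X,JY) - J(B(X,Y))`. -/
def Jcirc (J : E →ₗ[ℝ] E) (B : E → E → E) : E → E → E :=
  fun X Y => B (J X) Y + B X (J Y) - J (B X Y)

/-- The action `J⋆B = (1/2)·(J·B + J⟲B)`. -/
noncomputable def Jstar (J : E →ₗ[ℝ] E) (B : E → E → E) : E → E → E :=
  fun X Y => (2⁻¹ : ℝ) • (Jdot J B X Y + Jcirc J B X Y)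

/-- The `(ε, ε')`-component `B^{ε,ε'}` of `B` with respect to `J`. -/
noncomputable def Jcomp (J : E →ₗ[ℝ] E) (B : E → E → E) (ε ε' : ℝ) : E → E → E :=
  fun X Y =>
    -(4⁻¹ : ℝ) • ((ε * ε') • B (J X) (J Y) + ε • J (B (J X) Y) + ε' • J (B X (J Y))
      - B X Y)

theorem Jstar_add_left (J : E →ₗ[ℝ] E) (B : E →ₗ[ℝ] E →ₗ[ℝ] E) (X X' Y : E) :
    Jstar J (fun X Y => B X Y) (X + X') Y
      = Jstar J (fun X Y => B X Y) X Y + Jstar J (fun X Y => B X Y) X' Y := by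
  simp only [Jstar, Jdot, Jcirc, map_add, LinearMap.add_apply]
  module

theorem Jstar_add_right (J : E →ₗ[ℝ] E) (B : E →ₗ[ℝ] E →ₗ[ℝ] E) (X Y Y' : E) :
    Jstar J (fun X Y => B X Y) X (Y + Y')
      = Jstar J (fun X Y => B X Y) X Y + Jstar J (fun X Y => B X Y) X Y' := by
  simp only [Jstar, Jdot, Jcirc, map_add]
  module

theorem Jstar_eq_neg_add_Jcomp {J : E →ₗ[ℝ] E} (hJ : ∀ x, J (J x) = -x)
    (B : E →ₗ[ℝ] E →ₗ[ℝ] E) (X Y : E) :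
    Jstar J (fun X Y => B X Y) X Y
      = -J (B (J X) (J Y)) + (2 : ℝ) • J (Jcomp J (fun X Y => B X Y) (-1) (-1) (J X) (J Y)) := by
  simp only [Jstar, Jdot, Jcirc, Jcomp, hJ, map_add, map_sub, map_neg, map_smul,
    LinearMap.neg_apply]
  module

section Twist

variable {J K : E →ₗ[ℝ] E} {Ep Em : Submodule ℝ E}
  (hKp : ∀ x ∈ Ep, K x = J x) (hKm : ∀ x ∈ Em, K x = -J x)
include hKp hKm

theorem twist_apply_twist (hJ : ∀ x, J (J x) = -x) (hcod : Codisjoint Ep Em)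
    (hJp : ∀ x ∈ Ep, J x ∈ Ep) (hJm : ∀ x ∈ Em, J x ∈ Em) (x : E) :
    K (K x) = -x := by
  obtain ⟨p, m, hp, hm, rfl⟩ := Submodule.codisjoint_iff_exists_add_eq.mp hcod x
  rw [map_add, hKp p hp, hKm m hm, map_add, hKp _ (hJp p hp), map_neg,
    hKm _ (hJm m hm), hJ, hJ, neg_neg, neg_add]

theorem twist_apply_of_sub_mem_of_mem {z c : E} (hzc : z - c ∈ Ep) (hc : c ∈ Em) :
    K z = J z - (2 : ℝ) • J c := by
  conv_lhs => rw [← sub_add_cancel z c]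
  rw [map_add, hKp _ hzc, hKm _ hc, map_sub]
  module

theorem twist_apply_of_sub_mem_of_mem' {z c : E} (hzc : z - c ∈ Em) (hc : c ∈ Ep) :
    K z = (2 : ℝ) • J c - J z := by
  conv_lhs => rw [← sub_add_cancel z c]
  rw [map_add, hKm _ hzc, hKp _ hc, map_sub]
  module

theorem Jstar_eq_neg_twist_of_mem_of_mem (hJ : ∀ x, J (J x) = -x)
    (hJp : ∀ x ∈ Ep, J x ∈ Ep) (hJm : ∀ x ∈ Em, J x ∈ Em) (B : E →ₗ[ℝ] E →ₗ[ℝ] E)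
    (hpp : ∀ X ∈ Ep, ∀ Y ∈ Ep,
      (B X Y - Jcomp J (fun X Y => B X Y) (-1) (-1) X Y) ∈ Ep ∧
      Jcomp J (fun X Y => B X Y) (-1) (-1) X Y ∈ Em)
    (hpm : ∀ X ∈ Ep, ∀ Y ∈ Em,
      (B X Y - Jcomp J (fun X Y => B X Y) (-1) (-1) X Y) ∈ Em ∧
      Jcomp J (fun X Y => B X Y) (-1) (-1) X Y ∈ Ep)
    (hmp : ∀ X ∈ Em, ∀ Y ∈ Ep,
      (B X Y - Jcomp J (fun X Y => B X Y) (-1) (-1) X Y) ∈ Em ∧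
      Jcomp J (fun X Y => B X Y) (-1) (-1) X Y ∈ Ep)
    (hmm : ∀ X ∈ Em, ∀ Y ∈ Em,
      (B X Y - Jcomp J (fun X Y => B X Y) (-1) (-1) X Y) ∈ Ep ∧
      Jcomp J (fun X Y => B X Y) (-1) (-1) X Y ∈ Em)
    {X Y : E} (hX : X ∈ Ep ∨ X ∈ Em) (hY : Y ∈ Ep ∨ Y ∈ Em) :
    Jstar J (fun X Y => B X Y) X Y = -K (B (K X) (K Y)) := by
  rw [Jstar_eq_neg_add_Jcomp hJ]
  rcases hX with hX | hX <;> rcases hY with hY | hY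
  · obtain ⟨hsum, hcomp⟩ := hpp _ (hJp X hX) _ (hJp Y hY)
    rw [hKp X hX, hKp Y hY, twist_apply_of_sub_mem_of_mem hKp hKm hsum hcomp]
    module
  · obtain ⟨hsum, hcomp⟩ := hpm _ (hJp X hX) _ (hJm Y hY)
    simp only [hKp X hX, hKm Y hY, map_neg]
    rw [twist_apply_of_sub_mem_of_mem' hKp hKm hsum hcomp]
    module
  · obtain ⟨hsum, hcomp⟩ := hmp _ (hJm X hX) _ (hJp Y hY)
    simp only [hKm X hX, hKp Y hY, map_neg, LinearMap.neg_apply]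
    rw [twist_apply_of_sub_mem_of_mem' hKp hKm hsum hcomp]
    module
  · obtain ⟨hsum, hcomp⟩ := hmm _ (hJm X hX) _ (hJm Y hY)
    simp only [hKm X hX, hKm Y hY, map_neg, LinearMap.neg_apply]
    rw [twist_apply_of_sub_mem_of_mem hKp hKm hsum hcomp]
    module

end Twist

/-- Suppose `E = E⁺ ⊕ E⁻` with both summands `J`-invariant, and let `B` be bilinear
with, for all `α, α' ∈ {+,-}`: `B^{**}(E^α, E^{α'}) ⊆ E^{αα'}` and
`B^{--}(E^α, E^{α'}) ⊆ E^{-αα'}`, where `B^{**} := B - B^{-,-}`.  Define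
`J⋆ = J` on `E⁺` and `J⋆ = -J` on `E⁻`.  Then `J⋆ ∘ J⋆ = -id` and `J⋆B = J⋆·B`,
i.e. `(J⋆B)(X,Y) = -J⋆(B(J⋆X, J⋆Y))` for all `X, Y`. -/
theorem stmt_18 (J : E →ₗ[ℝ] E) (hJ : ∀ x, J (J x) = -x)
    (Ep Em : Submodule ℝ E) (hcompl : IsCompl Ep Em)
    (hJp : ∀ x ∈ Ep, J x ∈ Ep) (hJm : ∀ x ∈ Em, J x ∈ Em)
    (B : E →ₗ[ℝ] E →ₗ[ℝ] E)
    (hpp : ∀ X ∈ Ep, ∀ Y ∈ Ep,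
      (B X Y - Jcomp J (fun X Y => B X Y) (-1) (-1) X Y) ∈ Ep ∧
      Jcomp J (fun X Y => B X Y) (-1) (-1) X Y ∈ Em)
    (hpm : ∀ X ∈ Ep, ∀ Y ∈ Em,
      (B X Y - Jcomp J (fun X Y => B X Y) (-1) (-1) X Y) ∈ Em ∧
      Jcomp J (fun X Y => B X Y) (-1) (-1) X Y ∈ Ep)
    (hmp : ∀ X ∈ Em, ∀ Y ∈ Ep,
      (B X Y - Jcomp J (fun X Y => B X Y) (-1) (-1) X Y) ∈ Em ∧
      Jcomp J (fun X Y => B X Y) (-1) (-1) X Y ∈ Ep)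
    (hmm : ∀ X ∈ Em, ∀ Y ∈ Em,
      (B X Y - Jcomp J (fun X Y => B X Y) (-1) (-1) X Y) ∈ Ep ∧
      Jcomp J (fun X Y => B X Y) (-1) (-1) X Y ∈ Em)
    (K : E →ₗ[ℝ] E) (hKp : ∀ x ∈ Ep, K x = J x) (hKm : ∀ x ∈ Em, K x = -J x) :
    (∀ x, K (K x) = -x) ∧
    (∀ X Y, Jstar J (fun X Y => B X Y) X Y = -K (B (K X) (K Y))) := by
  refine ⟨twist_apply_twist hKp hKm hJ hcompl.codisjoint hJp hJm, fun X Y => ?_⟩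
  have pure {X Y : E} (hX : X ∈ Ep ∨ X ∈ Em) (hY : Y ∈ Ep ∨ Y ∈ Em) :=
    Jstar_eq_neg_twist_of_mem_of_mem hKp hKm hJ hJp hJm B hpp hpm hmp hmm hX hY
  obtain ⟨xp, xm, hxp, hxm, rfl⟩ :=
    Submodule.codisjoint_iff_exists_add_eq.mp hcompl.codisjoint X
  obtain ⟨yp, ym, hyp, hym, rfl⟩ :=
    Submodule.codisjoint_iff_exists_add_eq.mp hcompl.codisjoint Y
  rw [Jstar_add_left, Jstar_add_right, Jstar_add_right,
    pure (.inl hxp) (.inl hyp), pure (.inl hxp) (.inr hym),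
    pure (.inr hxm) (.inl hyp), pure (.inr hxm) (.inr hym)]
  simp only [map_add, LinearMap.add_apply]
  abel

end
end
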